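/- arXiv:1805.10676 — 2 statements merged into one kernel-verified Lean document; each statement's English description precedes it below -/
import Mathlib

section
/- For every ε > 0, every n-vertex graph G with δ(G) ≥ (1/2 + ε)n, and every pair of distinct vertices x, y of G, the number of walks x v₁ v₂ v₃ v₄ y in G (i.e., 6-term sequences of vertices starting at x and ending at y in which consecutive entries are adjacent) is at least (ε/4)·n⁴. -/
/-!
Choose `v₁ ∈ N(x)`, `v₂ ∈ N(v₁)`, `v₄ ∈ N(y)` and then `v₃ ∈ N(v₂) ∩ N(v₄)`. With minimum
degree `δ`, any two neighbourhoods share at least `2δ - n` vertices, so there are at least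
`δ³ (2δ - n) ≥ (n/2)³ · 2εn = (ε/4) n⁴` such walks.
-/

open Finset

namespace RAG

/-- The candidate edges of the complete graph on `Fin n`. -/
def cands (n : ℕ) : Finset (Sym2 (Fin n)) := Finset.univ.filter (fun e => ¬ e.IsDiag)

open Classical in
/-- The probability that the binomial random graph `G(n,p)` satisfies the predicate `P`. -/
noncomputable def prG (n : ℕ) (p : ℝ) (P : SimpleGraph (Fin n) → Prop) : ℝ :=
  ∑ E ∈ (cands n).powerset,
    if P (SimpleGraph.fromEdgeSet (E : Set (Sym2 (Fin n)))) then
      p ^ E.card * (1 - p) ^ ((cands n).card - E.card) else 0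

/-- The degree of a vertex. -/
noncomputable def deg {V : Type*} (G : SimpleGraph V) (v : V) : ℕ := (G.neighborSet v).ncard

/-- A `k`-walk (the `k`-th power of a walk): any two entries whose positions differ
by at most `k` are adjacent. -/
def IsPowWalk {V : Type*} (G : SimpleGraph V) (k : ℕ) (vs : List V) : Prop :=
  ∀ i j : Fin vs.length, (i : ℕ) < j → (j : ℕ) ≤ i + k → G.Adj (vs.get i) (vs.get j)

/-- A `k`-path (the `k`-th power of a path): distinct vertices, and any two entries whose
positions differ by at most `k` are adjacent. -/
def IsPowPath {V : Type*} (G : SimpleGraph V) (k : ℕ) (vs : List V) : Prop :=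
  vs.Nodup ∧ IsPowWalk G k vs

/-- An ordered clique: a list of distinct, pairwise adjacent vertices. -/
def IsOrdClique {V : Type*} (G : SimpleGraph V) (K : List V) : Prop :=
  K.Nodup ∧ K.Pairwise G.Adj

/-- The `k`-th power of a graph. -/
def gpow {V : Type*} (H : SimpleGraph V) (k : ℕ) : SimpleGraph V where
  Adj u v := u ≠ v ∧ H.Reachable u v ∧ H.dist u v ≤ k
  symm := ⟨fun u v ⟨h1, h2, h3⟩ => ⟨h1.symm, h2.symm, by rwa [SimpleGraph.dist_comm]⟩⟩
  loopless := ⟨fun v h => h.1 rfl⟩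

/-- `H` contains the `m`-th power of a Hamiltonian cycle. -/
def HasHamCyclePow (n : ℕ) (H : SimpleGraph (Fin n)) (m : ℕ) : Prop :=
  ∃ σ : Fin n ≃ Fin n, ∀ u v : Fin n,
    (gpow (SimpleGraph.cycleGraph n) m).Adj u v → H.Adj (σ u) (σ v)

/-- Joint neighbourhood of a set of vertices. -/
def jN {V : Type*} (G : SimpleGraph V) (J : Finset V) : Set V := {v | ∀ u ∈ J, G.Adj u v}

/-- Number of edges between two (disjoint) vertex sets, counted as pairs `(a, b) ∈ A × B`. -/
noncomputable def eB {V : Type*} (G : SimpleGraph V) (A B : Finset V) : ℕ :=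
  ({pq : V × V | pq.1 ∈ A ∧ pq.2 ∈ B ∧ G.Adj pq.1 pq.2}).ncard

/-- Edge density between two vertex sets. -/
noncomputable def dens {V : Type*} (G : SimpleGraph V) (A B : Finset V) : ℝ :=
  (eB G A B : ℝ) / ((A.card : ℝ) * (B.card : ℝ))

/-- `(δ, d)`-quasirandomness of the pair `(A, B)`. -/
def IsQRd {V : Type*} (G : SimpleGraph V) (δ d : ℝ) (A B : Finset V) : Prop :=
  ∀ X ⊆ A, ∀ Y ⊆ B,
    |(eB G X Y : ℝ) - d * (X.card : ℝ) * (Y.card : ℝ)| ≤ δ * (A.card : ℝ) * (B.card : ℝ)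

/-- `δ`-quasirandomness of the pair `(A, B)`. -/
def IsQR {V : Type*} (G : SimpleGraph V) (δ : ℝ) (A B : Finset V) : Prop :=
  IsQRd G δ (dens G A B) A B

/-- The graph `K_r` minus one edge (the edge between the first two vertices). -/
def Krm (r : ℕ) : SimpleGraph (Fin r) :=
  (⊤ : SimpleGraph (Fin r)) \
    SimpleGraph.fromEdgeSet {e | ∃ a b : Fin r, (a : ℕ) = 0 ∧ (b : ℕ) = 1 ∧ e = s(a, b)}

/-- The graph `P⁻`: the `(k+1)`-st power of the path on `2k+2` vertices with the middle
edge removed. -/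
def Pminus (k : ℕ) : SimpleGraph (Fin (2 * k + 2)) :=
  gpow (SimpleGraph.pathGraph (2 * k + 2)) (k + 1) \
    SimpleGraph.fromEdgeSet {s(⟨k, by omega⟩, ⟨k + 1, by omega⟩)}

end RAG

namespace SimpleGraph

variable {V : Type*} [Fintype V] [DecidableEq V] (G : SimpleGraph V) [DecidableRel G.Adj]

lemma two_mul_minDegree_sub_card_le_card_inter (u v : V) :
    2 * G.minDegree - Fintype.card V ≤ #(G.neighborFinset u ∩ G.neighborFinset v) := by
  have hunion := card_le_univ (G.neighborFinset u ∪ G.neighborFinset v)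
  rw [← add_le_add_iff_right #(G.neighborFinset u ∩ G.neighborFinset v),
    card_union_add_card_inter, card_neighborFinset_eq_degree,
    card_neighborFinset_eq_degree] at hunion
  have := G.minDegree_le_degree u
  have := G.minDegree_le_degree v
  omega

lemma pow_three_mul_le_ncard_walks_four {δ c : ℕ} (hδ : ∀ v, δ ≤ G.degree v)
    (hc : ∀ u v, c ≤ #(G.neighborFinset u ∩ G.neighborFinset v)) (x y : V) :
    δ ^ 3 * c ≤ ({f : Fin 4 → V | G.Adj x (f 0) ∧ G.Adj (f 0) (f 1) ∧ G.Adj (f 1) (f 2) ∧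
      G.Adj (f 2) (f 3) ∧ G.Adj (f 3) y}).ncard := by
  have mul_le_sum {s : Finset V} {m : ℕ} {g : V → ℕ} (hs : δ ≤ #s) (hg : ∀ a ∈ s, m ≤ g a) :
      δ * m ≤ ∑ a ∈ s, g a :=
    (Nat.mul_le_mul_right m hs).trans (smul_eq_mul #s m ▸ card_nsmul_le_sum s g m hg)
  let N := G.neighborFinset
  let T := (N x).sigma fun a => (N a).sigma fun b => (N y).sigma fun d => N b ∩ N d
  have hT : δ ^ 3 * c ≤ #T := by
    simp only [T, card_sigma, pow_succ, pow_zero, one_mul, mul_assoc]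
    refine mul_le_sum (by simp [N, hδ]) fun a _ => mul_le_sum (by simp [N, hδ]) fun b _ =>
      mul_le_sum (by simp [N, hδ]) fun d _ => hc b d
  rw [← Set.ncard_coe_finset] at hT
  refine hT.trans (Set.ncard_le_ncard_of_injOn (fun t => ![t.1, t.2.1, t.2.2.2, t.2.2.1]) ?_ ?_)
  · rintro ⟨a, b, d, c⟩ ht
    simp only [T, N, coe_sigma, Set.mem_sigma_iff, mem_coe, mem_inter,
      mem_neighborFinset] at ht
    obtain ⟨hxa, hab, hyd, hbc, hdc⟩ := ht
    exact ⟨hxa, hab, hbc, hdc.symm, hyd.symm⟩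
  · rintro ⟨a, b, d, c⟩ - ⟨a', b', d', c'⟩ - h
    obtain rfl : a = a' := congrFun h 0
    obtain rfl : b = b' := congrFun h 1
    obtain rfl : c = c' := congrFun h 2
    obtain rfl : d = d' := congrFun h 3
    rfl

end SimpleGraph

lemma RAG.deg_eq_degree {V : Type*} [Fintype V] (G : SimpleGraph V) [DecidableRel G.Adj]
    (v : V) : RAG.deg G v = G.degree v := by
  rw [RAG.deg, Set.ncard_eq_toFinset_card', ← G.card_neighborSet_eq_degree, Set.toFinset_card]

theorem statement_10_general (ε : ℝ) (hε : 0 < ε) (n : ℕ) (G : SimpleGraph (Fin n))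
    (hdeg : ∀ v : Fin n, (1/2 + ε) * n ≤ (RAG.deg G v : ℝ)) (x y : Fin n) :
    ε/4 * (n : ℝ)^4 ≤ (({f : Fin 4 → Fin n |
      G.Adj x (f 0) ∧ G.Adj (f 0) (f 1) ∧ G.Adj (f 1) (f 2) ∧ G.Adj (f 2) (f 3) ∧
        G.Adj (f 3) y}).ncard : ℝ) := by
  classical
  have : Nonempty (Fin n) := ⟨x⟩
  set δ := G.minDegree
  have hδ : (1/2 + ε) * n ≤ δ := by
    obtain ⟨v, hv⟩ := G.exists_minimal_degree_vertex
    simpa [δ, hv, RAG.deg_eq_degree] using hdeg v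
  have hn : n ≤ 2 * δ := by exact_mod_cast (by nlinarith : (n : ℝ) ≤ 2 * δ)
  have hwalks := G.pow_three_mul_le_ncard_walks_four G.minDegree_le_degree
    G.two_mul_minDegree_sub_card_le_card_inter x y
  rw [Fintype.card_fin] at hwalks
  calc ε/4 * (n : ℝ)^4 = ((n : ℝ)/2)^3 * (2 * ε * n) := by ring
    _ ≤ (δ : ℝ)^3 * ((2 * δ - n : ℕ) : ℝ) := by
        rw [Nat.cast_sub hn]; push_cast; gcongr <;> nlinarith
    _ ≤ _ := by exact_mod_cast hwalks

/-- Counting walks with four internal vertices between two fixed vertices. -/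
theorem statement_10 (ε : ℝ) (hε : 0 < ε) (n : ℕ) (G : SimpleGraph (Fin n))
    (hdeg : ∀ v : Fin n, (1/2 + ε) * n ≤ (RAG.deg G v : ℝ)) (x y : Fin n) (hxy : x ≠ y) :
    ε/4 * (n : ℝ)^4 ≤ (({f : Fin 4 → Fin n |
      G.Adj x (f 0) ∧ G.Adj (f 0) (f 1) ∧ G.Adj (f 1) (f 2) ∧ G.Adj (f 2) (f 3) ∧
        G.Adj (f 3) y}).ncard : ℝ) :=
  statement_10_general ε hε n G hdeg x y
end

section
/- (Counting Lemma) Let δ > 0, let F be a graph with vertex set [f] = {1,…,f}, and let G be a graph with a partition V(G) = V₁ ∪ … ∪ V_f into pairwise disjoint sets such that the pair (V_i, V_j) is δ-quasirandom whenever ij is an edge of F. For ij ∈ E(F) let d_{ij} = e(V_i,V_j)/(|V_i||V_j|) be the density of (V_i,V_j) (set to 0 if V_i or V_j is empty). Then the number of f-tuples (v₁,…,v_f) ∈ V₁ × ⋯ × V_f such that v_i v_j is an edge of G whenever ij ∈ E(F) differs from (∏_{ij ∈ E(F)} d_{ij}) · ∏_{i=1}^f |V_i| by at most e(F) · δ ·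 ∏_{i=1}^f |V_i|. -/
open Finset

/-!
Induction on the edges of `F`. Adding an edge `ij` to a set `S` of edges: once the coordinates
of `g` off `{i, j}` are fixed, the admissible values of `(g i, g j)` form a rectangle
`X × Y ⊆ V_i × V_j`, because no edge of `S` meets both `i` and `j`. On that fibre the count
for `S ∪ {ij}` is `e(X, Y)` and the count for `S` is `|X||Y|`, so quasirandomness of
`(V_i, V_j)` bounds the fibre's error by `δ |V_i||V_j|`; summing over the `∏_{k ≠ i, j} |V_k|`
fibres costs `δ ∏ |V_k|` per edge, and the earlier errors are only multiplied by `d_ij ≤ 1`.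
-/

namespace RAG

variable {V : Type*} (G : SimpleGraph V)

section Density

theorem eB_eq_card_filter [DecidableRel G.Adj] (A B : Finset V) :
    eB G A B = #{pq ∈ A ×ˢ B | G.Adj pq.1 pq.2} := by
  rw [eB, ← Set.ncard_coe_finset]
  congr 1
  ext
  simp [and_assoc]

theorem dens_nonneg (A B : Finset V) : 0 ≤ dens G A B := by
  unfold dens
  positivity

theorem dens_le_one (A B : Finset V) : dens G A B ≤ 1 := by
  classical
  refine div_le_one_of_le₀ ?_ (by positivity)
  rw [eB_eq_card_filter, ← Nat.cast_mul, ← card_product]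
  exact_mod_cast card_filter_le _ _

theorem IsQRd.abs_card_filter_adj_sub_le [DecidableEq V] [DecidableRel G.Adj] {δ d : ℝ}
    {A B : Finset V} (hQR : IsQRd G δ d A B) {Q : Finset (V × V)} (hQ : Q ⊆ A ×ˢ B)
    (hrect : ∀ p ∈ Q, ∀ q ∈ Q, (p.1, q.2) ∈ Q) :
    |(#{p ∈ Q | G.Adj p.1 p.2} : ℝ) - d * #Q| ≤ δ * #A * #B := by
  have hQ_eq : Q = Q.image Prod.fst ×ˢ Q.image Prod.snd := by
    ext ⟨x, y⟩
    simp only [mem_product, mem_image]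
    constructor
    · intro h
      exact ⟨⟨_, h, rfl⟩, ⟨_, h, rfl⟩⟩
    · rintro ⟨⟨p, hp, rfl⟩, ⟨q, hq, rfl⟩⟩
      exact hrect p hp q hq
  have hX : Q.image Prod.fst ⊆ A := fun x hx => by
    obtain ⟨p, hp, rfl⟩ := mem_image.mp hx
    exact (mem_product.mp (hQ hp)).1
  have hY : Q.image Prod.snd ⊆ B := fun y hy => by
    obtain ⟨p, hp, rfl⟩ := mem_image.mp hy
    exact (mem_product.mp (hQ hp)).2
  have := hQR _ hX _ hY
  rwa [eB_eq_card_filter, ← hQ_eq, mul_assoc d, ← Nat.cast_mul, ← card_product, ← hQ_eq]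
    at this

end Density

section Counting

variable {ι : Type*} {i j : ι}

theorem eq_of_eqOn_compl_pair {g g' : ι → V} (h : Set.EqOn g g' ({i, j}ᶜ : Set ι))
    (hi : g i = g' i) (hj : g j = g' j) : g = g' := by
  funext k
  by_cases hki : k = i
  · rw [hki, hi]
  by_cases hkj : k = j
  · rw [hkj, hj]
  exact h (by simp [hki, hkj])

variable [DecidableEq ι]

theorem domRestrict_update_of_notMem {s : Set ι} {k : ι} (hk : k ∉ s) (g : ι → V) (x : V) :
    s.domRestrict (Function.update g k x) = s.domRestrict g :=
  Set.domRestrict_eq_domRestrict_iff.mpr fun _ hl =>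
    Function.update_of_ne (ne_of_mem_of_not_mem hl hk) _ _

theorem adj_update_of_eqOn_compl_pair (hij : i ≠ j) {S : Finset (ι × ι)} (hSij : (i, j) ∉ S)
    (hSji : (j, i) ∉ S) {g g' : ι → V} (hgg' : Set.EqOn g g' ({i, j}ᶜ : Set ι))
    (hg : ∀ p ∈ S, G.Adj (g p.1) (g p.2)) (hg' : ∀ p ∈ S, G.Adj (g' p.1) (g' p.2)) :
    ∀ p ∈ S, G.Adj (Function.update g j (g' j) p.1) (Function.update g j (g' j) p.2) := by
  have off_i : ∀ k, k ≠ i → Function.update g j (g' j) k = g' k := fun k hki => by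
    by_cases hkj : k = j
    · simp [hkj]
    · simpa [hkj] using hgg' (by simp [hki, hkj])
  have off_j : ∀ k, k ≠ j → Function.update g j (g' j) k = g k := fun k hkj => by simp [hkj]
  rintro ⟨a, b⟩ hab
  by_cases hi : a ≠ i ∧ b ≠ i
  · rw [off_i a hi.1, off_i b hi.2]
    exact hg' _ hab
  · have hj : a ≠ j ∧ b ≠ j := by
      rw [not_and_or, not_not, not_not] at hi
      rcases hi with rfl | rfl <;> refine ⟨?_, ?_⟩ <;> rintro rfl <;> simp_all
    rw [off_j a hj.1, off_j b hj.2]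
    exact hg _ hab


variable [Fintype ι]

open Classical in
noncomputable def homCount (Vs : ι → Finset V) (S : Finset (ι × ι)) : ℕ :=
  #{g ∈ Fintype.piFinset Vs | ∀ p ∈ S, G.Adj (g p.1) (g p.2)}

theorem homCount_empty (Vs : ι → Finset V) : homCount G Vs ∅ = ∏ k, #(Vs k) := by
  simp [homCount, Fintype.card_piFinset]

variable {Vs : ι → Finset V}

theorem update_mem_piFinset {g : ι → V} (hg : g ∈ Fintype.piFinset Vs) {x : V}
    (hx : x ∈ Vs j) :
    Function.update g j x ∈ Fintype.piFinset Vs := by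
  rw [Fintype.mem_piFinset] at hg ⊢
  intro k
  by_cases hkj : k = j
  · subst hkj
    simpa
  · simpa [hkj] using hg k

open Classical in
theorem card_fibre_domRestrict_compl_pair (hij : i ≠ j) {g₀ : ι → V}
    (hg₀ : g₀ ∈ Fintype.piFinset Vs) :
    #{g ∈ Fintype.piFinset Vs | ({i, j}ᶜ : Set ι).domRestrict g =
      ({i, j}ᶜ : Set ι).domRestrict g₀} = #(Vs i) * #(Vs j) := by
  rw [← card_product]
  refine card_bij (fun g _ => (g i, g j)) (fun g hg => ?_) (fun g hg g' hg' hgg' => ?_) ?_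
  · have hg := (mem_filter.mp hg).1
    rw [Fintype.mem_piFinset] at hg
    exact mem_product.mpr ⟨hg i, hg j⟩
  · obtain ⟨hi, hj⟩ := Prod.ext_iff.mp hgg'
    exact eq_of_eqOn_compl_pair (Set.domRestrict_eq_domRestrict_iff.mp
      ((mem_filter.mp hg).2.trans (mem_filter.mp hg').2.symm)) hi hj
  · rintro ⟨x, y⟩ hxy
    obtain ⟨hx, hy⟩ := mem_product.mp hxy
    refine ⟨Function.update (Function.update g₀ i x) j y, mem_filter.mpr
      ⟨update_mem_piFinset (update_mem_piFinset hg₀ hx) hy, ?_⟩, by simp [hij]⟩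
    rw [domRestrict_update_of_notMem (by simp), domRestrict_update_of_notMem (by simp)]

variable {δ d : ℝ}

open Classical in
theorem abs_card_fibre_sub_le (hij : i ≠ j) {S : Finset (ι × ι)} (hSij : (i, j) ∉ S)
    (hSji : (j, i) ∉ S) (hQR : IsQRd G δ d (Vs i) (Vs j)) (h : ({i, j}ᶜ : Set ι) → V) :
    |(#{g ∈ Fintype.piFinset Vs | (∀ p ∈ insert (i, j) S, G.Adj (g p.1) (g p.2)) ∧
          ({i, j}ᶜ : Set ι).domRestrict g = h} : ℝ) -
      d * #{g ∈ Fintype.piFinset Vs | (∀ p ∈ S, G.Adj (g p.1) (g p.2)) ∧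
          ({i, j}ᶜ : Set ι).domRestrict g = h}| ≤ δ * #(Vs i) * #(Vs j) := by
  set F := {g ∈ Fintype.piFinset Vs | (∀ p ∈ S, G.Adj (g p.1) (g p.2)) ∧
    ({i, j}ᶜ : Set ι).domRestrict g = h}
  have hF' : {g ∈ Fintype.piFinset Vs | (∀ p ∈ insert (i, j) S, G.Adj (g p.1) (g p.2)) ∧
      ({i, j}ᶜ : Set ι).domRestrict g = h} = {g ∈ F | G.Adj (g i) (g j)} := by
    ext g
    simp only [F, mem_filter, forall_mem_insert]
    tauto
  have hinj : Set.InjOn (fun g : ι → V => (g i, g j)) F := fun g hg g' hg' hgg' =>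
    eq_of_eqOn_compl_pair (Set.domRestrict_eq_domRestrict_iff.mp
      (((mem_filter.mp hg).2.2).trans ((mem_filter.mp hg').2.2).symm))
      (Prod.ext_iff.mp hgg').1 (Prod.ext_iff.mp hgg').2
  have hrect : ∀ p ∈ F.image (fun g => (g i, g j)), ∀ q ∈ F.image (fun g => (g i, g j)),
      (p.1, q.2) ∈ F.image (fun g => (g i, g j)) := by
    simp only [mem_image]
    rintro _ ⟨g, hg, rfl⟩ _ ⟨g', hg', rfl⟩
    obtain ⟨hgP, hgS, hgh⟩ := mem_filter.mp hg
    obtain ⟨hg'P, hg'S, hg'h⟩ := mem_filter.mp hg'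
    have hupdate : Function.update g j (g' j) ∈ F := by
      refine mem_filter.mpr ⟨update_mem_piFinset hgP (Fintype.mem_piFinset.mp hg'P j), ?_, ?_⟩
      · exact adj_update_of_eqOn_compl_pair G hij hSij hSji
          (Set.domRestrict_eq_domRestrict_iff.mp (hgh.trans hg'h.symm)) hgS hg'S
      · rwa [domRestrict_update_of_notMem (by simp)]
    exact ⟨_, hupdate, by simp [hij]⟩
  have hQ : F.image (fun g => (g i, g j)) ⊆ Vs i ×ˢ Vs j := fun p hp => by
    obtain ⟨g, hg, rfl⟩ := mem_image.mp hp
    have hgP := Fintype.mem_piFinset.mp (mem_filter.mp hg).1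
    exact mem_product.mpr ⟨hgP i, hgP j⟩
  have := hQR.abs_card_filter_adj_sub_le G hQ hrect
  rwa [filter_image, card_image_of_injOn (hinj.mono (filter_subset _ _)),
    card_image_of_injOn hinj, ← hF'] at this

open Classical in
theorem abs_homCount_insert_sub_le (hij : i ≠ j) {S : Finset (ι × ι)} (hSij : (i, j) ∉ S)
    (hSji : (j, i) ∉ S) (hQR : IsQRd G δ d (Vs i) (Vs j)) :
    |(homCount G Vs (insert (i, j) S) : ℝ) - d * homCount G Vs S| ≤
      δ * ∏ k, (#(Vs k) : ℝ) := by
  set π : (ι → V) → (({i, j}ᶜ : Set ι) → V) := ({i, j}ᶜ : Set ι).domRestrict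
  set T := (Fintype.piFinset Vs).image π
  have hcount : ∀ S' : Finset (ι × ι), homCount G Vs S' = ∑ h ∈ T,
      #{g ∈ Fintype.piFinset Vs | (∀ p ∈ S', G.Adj (g p.1) (g p.2)) ∧ π g = h} := by
    intro S'
    rw [homCount, card_eq_sum_card_fiberwise fun g hg => mem_image_of_mem π (mem_filter.mp hg).1]
    simp only [filter_filter]
    rfl
  have hcard : ∏ k, (#(Vs k) : ℝ) = ∑ _h ∈ T, (#(Vs i) * #(Vs j) : ℝ) := by
    rw [← Nat.cast_prod, ← Fintype.card_piFinset,
      card_eq_sum_card_fiberwise fun g hg => mem_image_of_mem π hg]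
    push_cast
    refine sum_congr rfl fun h hh => ?_
    obtain ⟨g₀, hg₀, rfl⟩ := mem_image.mp hh
    exact_mod_cast card_fibre_domRestrict_compl_pair hij hg₀
  rw [hcount, hcount, hcard]
  push_cast
  rw [mul_sum, mul_sum, ← sum_sub_distrib]
  refine (abs_sum_le_sum_abs _ _).trans (sum_le_sum fun h _ => ?_)
  exact (abs_card_fibre_sub_le G hij hSij hSji hQR h).trans_eq (by ring)

end Counting

theorem abs_homCount_sub_le {ι : Type*} [Fintype ι] [LinearOrder ι] {δ : ℝ}
    (Vs : ι → Finset V) (S : Finset (ι × ι)) (hS : ∀ p ∈ S, p.1 < p.2)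
    (hQR : ∀ p ∈ S, IsQR G δ (Vs p.1) (Vs p.2)) :
    |(homCount G Vs S : ℝ) - (∏ p ∈ S, dens G (Vs p.1) (Vs p.2)) * ∏ k, (#(Vs k) : ℝ)| ≤
      #S * δ * ∏ k, (#(Vs k) : ℝ) := by
  induction S using Finset.induction_on with
  | empty => simp [homCount_empty]
  | @insert p S hpS ih =>
    obtain ⟨i, j⟩ := p
    have hij : i < j := hS _ (mem_insert_self _ _)
    have hji : (j, i) ∉ S := fun h => (hS _ (mem_insert_of_mem h)).not_gt hij
    set d := dens G (Vs i) (Vs j)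
    set M := ∏ k, (#(Vs k) : ℝ)
    have step := abs_homCount_insert_sub_le G hij.ne hpS hji (hQR _ (mem_insert_self _ _))
    have ih := ih (fun p hp => hS p (mem_insert_of_mem hp))
      (fun p hp => hQR p (mem_insert_of_mem hp))
    rw [prod_insert hpS, card_insert_of_notMem hpS]
    calc _ = |((homCount G Vs (insert (i, j) S) : ℝ) - d * homCount G Vs S) +
          d * ((homCount G Vs S : ℝ) - (∏ p ∈ S, dens G (Vs p.1) (Vs p.2)) * M)| := by
          congr 1
          ring
      _ ≤ δ * M + 1 * (#S * δ * M) := by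
          refine (abs_add_le _ _).trans (add_le_add step ?_)
          rw [abs_mul, abs_of_nonneg (dens_nonneg G _ _)]
          exact mul_le_mul (dens_le_one G _ _) ih (abs_nonneg _) zero_le_one
      _ = _ := by push_cast; ring

end RAG

open Classical in
theorem statement_15_general {V : Type*} (δ : ℝ) (f : ℕ)
    (F : SimpleGraph (Fin f)) (G : SimpleGraph V) (Vs : Fin f → Finset V)
    (hqr : ∀ i j, F.Adj i j → RAG.IsQR G δ (Vs i) (Vs j)) :
    |(({g : Fin f → V | (∀ i, g i ∈ Vs i) ∧
          ∀ i j, F.Adj i j → G.Adj (g i) (g j)}).ncard : ℝ) -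
      (∏ e ∈ Finset.univ.filter (fun e : Fin f × Fin f => e.1 < e.2 ∧ F.Adj e.1 e.2),
        RAG.dens G (Vs e.1) (Vs e.2)) * ∏ i, ((Vs i).card : ℝ)| ≤
      ((Finset.univ.filter (fun e : Fin f × Fin f => e.1 < e.2 ∧ F.Adj e.1 e.2)).card : ℝ) *
        δ * ∏ i, ((Vs i).card : ℝ) := by
  set S := Finset.univ.filter (fun e : Fin f × Fin f => e.1 < e.2 ∧ F.Adj e.1 e.2)
  have hset :
      {g : Fin f → V | (∀ i, g i ∈ Vs i) ∧ ∀ i j, F.Adj i j → G.Adj (g i) (g j)} =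
      {g ∈ Fintype.piFinset Vs | ∀ p ∈ S, G.Adj (g p.1) (g p.2)} := by
    ext g
    simp only [Set.mem_ofPred_eq, coe_filter, Fintype.mem_piFinset, S, mem_filter, mem_univ,
      true_and, Prod.forall]
    refine and_congr_right fun _ => ⟨fun h i j hij => h i j hij.2, fun h i j hadj => ?_⟩
    rcases lt_trichotomy i j with hlt | rfl | hgt
    · exact h i j ⟨hlt, hadj⟩
    · exact (F.loopless.irrefl i hadj).elim
    · exact (h j i ⟨hgt, hadj.symm⟩).symm
  rw [hset, Set.ncard_coe_finset]
  exact RAG.abs_homCount_sub_le G Vs S (fun p hp => (mem_filter.mp hp).2.1)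
    (fun p hp => hqr p.1 p.2 (mem_filter.mp hp).2.2)

open Classical in
/-- Counting Lemma. -/
theorem statement_15 {V : Type*} [Fintype V] (δ : ℝ) (hδ : 0 < δ) (f : ℕ)
    (F : SimpleGraph (Fin f)) (G : SimpleGraph V) (Vs : Fin f → Finset V)
    (hdisj : ∀ i j, i ≠ j → Disjoint (Vs i) (Vs j))
    (hcover : ∀ v : V, ∃ i, v ∈ Vs i)
    (hqr : ∀ i j, F.Adj i j → RAG.IsQR G δ (Vs i) (Vs j)) :
    |(({g : Fin f → V | (∀ i, g i ∈ Vs i) ∧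
          ∀ i j, F.Adj i j → G.Adj (g i) (g j)}).ncard : ℝ) -
      (∏ e ∈ Finset.univ.filter (fun e : Fin f × Fin f => e.1 < e.2 ∧ F.Adj e.1 e.2),
        RAG.dens G (Vs e.1) (Vs e.2)) * ∏ i, ((Vs i).card : ℝ)| ≤
      ((Finset.univ.filter (fun e : Fin f × Fin f => e.1 < e.2 ∧ F.Adj e.1 e.2)).card : ℝ) *
        δ * ∏ i, ((Vs i).card : ℝ) :=
  statement_15_general δ f F G Vs hqr
end
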